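/- Let f : ℝⁿ → ℝ be C² satisfying the local Hessian Lipschitz condition with constants L₀, L₁ ≥ 0 and radius δ > 0, let x with g = ∇f(x) ≠ 0, H = ∇²f(x), σ > 0, and let s satisfy ‖s‖ ≤ min(δ, 1/σ^{1/2}) and −(gᵀs + ½sᵀHs) ≥ σ^{1/2}‖g‖‖s‖² > 0. Then the ratio ρ = (f(x) − f(x+s))/(−(gᵀs + ½sᵀHs)) satisfies 1 − ρ ≤ (L₀/‖g‖ + L₁)/(6σ). -/

import Mathlib

/-!
Write `L = L₀ + L₁ ‖∇f x‖` and `φ t = f (x + t • s)`. The Lipschitz condition gives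
`φ'' t - φ'' 0 = ⟪s, (∇²f (x + t • s) - ∇²f x) s⟫ ≤ L ‖s‖³ t` on `[0, 1]`, and integrating this
twice bounds `f (x + s)` by the quadratic model plus `L ‖s‖³ / 6`. Dividing by a model decrease
of at least `√σ ‖∇f x‖ ‖s‖²` gives `1 - ρ ≤ L ‖s‖ / (6 √σ ‖∇f x‖)`, and `‖s‖ ≤ 1 / √σ` finishes.
-/

open Set

theorem sub_le_sub_of_hasDerivAt_le {u v u' v' : ℝ → ℝ} {a b : ℝ}
    (hu : ∀ t, HasDerivAt u (u' t) t) (hv : ∀ t, HasDerivAt v (v' t) t)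
    (h : ∀ t ∈ Ico a b, u' t ≤ v' t) : ∀ t ∈ Icc a b, u t - u a ≤ v t - v a := by
  have hB : ∀ t, HasDerivAt (fun t => v t - v a + u a) (v' t) t := fun t =>
    ((hv t).sub_const _).add_const _
  intro t ht
  have := image_le_of_deriv_right_le_deriv_boundary
    (fun t _ => (hu t).continuousAt.continuousWithinAt) (fun t _ => (hu t).hasDerivWithinAt)
    (by simp) (fun t _ => (hB t).continuousAt.continuousWithinAt)
    (fun t _ => (hB t).hasDerivWithinAt) h ht
  linarith

theorem apply_one_le_taylor_of_deriv2_sub_le {φ φ' φ'' : ℝ → ℝ} {C : ℝ}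
    (hφ : ∀ t, HasDerivAt φ (φ' t) t) (hφ' : ∀ t, HasDerivAt φ' (φ'' t) t)
    (hφ'' : ∀ t ∈ Icc (0 : ℝ) 1, φ'' t - φ'' 0 ≤ C * t) :
    φ 1 ≤ φ 0 + φ' 0 + φ'' 0 / 2 + C / 6 := by
  have hp₂ (t : ℝ) :
      HasDerivAt (fun t => φ'' 0 * t + C * t ^ 2 / 2) (φ'' 0 + C * t) t := by
    refine (((hasDerivAt_id' t).const_mul (φ'' 0)).add
      (((hasDerivAt_pow 2 t).const_mul C).div_const 2)).congr_deriv ?_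
    norm_num; ring
  have hp₃ (t : ℝ) : HasDerivAt (fun t => φ' 0 * t + φ'' 0 * t ^ 2 / 2 + C * t ^ 3 / 6)
      (φ' 0 + φ'' 0 * t + C * t ^ 2 / 2) t := by
    refine ((((hasDerivAt_id' t).const_mul (φ' 0)).add
      (((hasDerivAt_pow 2 t).const_mul (φ'' 0)).div_const 2)).add
      (((hasDerivAt_pow 3 t).const_mul C).div_const 6)).congr_deriv ?_
    norm_num; ring
  have hφ'_le : ∀ t ∈ Icc (0 : ℝ) 1, φ' t - φ' 0 ≤ φ'' 0 * t + C * t ^ 2 / 2 := by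
    intro t ht
    have := sub_le_sub_of_hasDerivAt_le hφ' hp₂
      (fun t ht => by linarith [hφ'' t (Ico_subset_Icc_self ht)]) t ht
    norm_num at this
    linarith
  have hφ_le := sub_le_sub_of_hasDerivAt_le hφ hp₃
    (fun t ht => by linarith [hφ'_le t (Ico_subset_Icc_self ht)]) 1 (right_mem_Icc.2 zero_le_one)
  norm_num at hφ_le
  linarith

section
variable {E F : Type*} [NormedAddCommGroup E] [NormedSpace ℝ E]
  [NormedAddCommGroup F] [NormedSpace ℝ F]

theorem hasDerivAt_comp_add_smul {G : E → F} {x s : E} {t : ℝ}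
    (hG : DifferentiableAt ℝ G (x + t • s)) :
    HasDerivAt (fun u : ℝ => G (x + u • s)) (fderiv ℝ G (x + t • s) s) t := by
  have hline : HasDerivAt (fun u : ℝ => x + u • s) s t := by
    simpa using ((hasDerivAt_id t).smul_const s).const_add x
  exact hG.hasFDerivAt.comp_hasDerivAt t hline

end

section
variable {E : Type*} [NormedAddCommGroup E] [InnerProductSpace ℝ E]

theorem real_inner_apply_sub_le (A B : E →L[ℝ] E) (s : E) :
    inner ℝ s (A s) - inner ℝ s (B s) ≤ ‖A - B‖ * ‖s‖ ^ 2 := by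
  calc inner ℝ s (A s) - inner ℝ s (B s) = inner ℝ s ((A - B) s) := by
        rw [sub_apply, inner_sub_right]
    _ ≤ ‖s‖ * ‖(A - B) s‖ := real_inner_le_norm _ _
    _ ≤ ‖s‖ * (‖A - B‖ * ‖s‖) := by gcongr; exact (A - B).le_opNorm s
    _ = ‖A - B‖ * ‖s‖ ^ 2 := by ring

variable [CompleteSpace E]

theorem ContDiff.differentiable_gradient {f : E → ℝ} (hf : ContDiff ℝ 2 f) :
    Differentiable ℝ (gradient f) :=
  ((InnerProductSpace.toDual ℝ E).symm.contDiff.comp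
    (hf.fderiv_right (m := 1) le_rfl)).differentiable one_ne_zero

theorem apply_add_le_of_hessian_lipschitz {f : E → ℝ} (hf : ContDiff ℝ 2 f) {x s : E} {L δ : ℝ}
    (hLip : ∀ y, ‖x - y‖ ≤ δ →
      ‖fderiv ℝ (gradient f) y - fderiv ℝ (gradient f) x‖ ≤ L * ‖x - y‖)
    (hs : ‖s‖ ≤ δ) :
    f (x + s) ≤ f x + inner ℝ (gradient f x) s
      + (1 / 2) * inner ℝ s (fderiv ℝ (gradient f) x s) + L * ‖s‖ ^ 3 / 6 := by
  have hφ (t : ℝ) : HasDerivAt (fun u : ℝ => f (x + u • s))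
      (inner ℝ (gradient f (x + t • s)) s) t := by
    rw [inner_gradient_left]
    exact hasDerivAt_comp_add_smul (hf.differentiable two_ne_zero _)
  have hφ' (t : ℝ) : HasDerivAt (fun u : ℝ => inner ℝ (gradient f (x + u • s)) s)
      (inner ℝ s (fderiv ℝ (gradient f) (x + t • s) s)) t := by
    have h := (innerSL ℝ s).hasFDerivAt.comp_hasDerivAt t
      (hasDerivAt_comp_add_smul (hf.differentiable_gradient (x + t • s)))
    simpa only [Function.comp_def, innerSL_apply_apply, real_inner_comm s] using h
  have hφ'' (t : ℝ) (ht : t ∈ Icc (0 : ℝ) 1) :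
      inner ℝ s (fderiv ℝ (gradient f) (x + t • s) s)
        - inner ℝ s (fderiv ℝ (gradient f) (x + (0 : ℝ) • s) s) ≤ L * ‖s‖ ^ 3 * t := by
    have hdist : ‖x - (x + t • s)‖ = t * ‖s‖ := by
      rw [sub_add_cancel_left, norm_neg, norm_smul, Real.norm_of_nonneg ht.1]
    have hδ : ‖x - (x + t • s)‖ ≤ δ := by
      rw [hdist]; nlinarith [ht.2, norm_nonneg s]
    rw [zero_smul, add_zero]
    calc _ ≤ ‖fderiv ℝ (gradient f) (x + t • s) - fderiv ℝ (gradient f) x‖ * ‖s‖ ^ 2 :=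
          real_inner_apply_sub_le _ _ s
      _ ≤ L * (t * ‖s‖) * ‖s‖ ^ 2 := by gcongr; rw [← hdist]; exact hLip _ hδ
      _ = L * ‖s‖ ^ 3 * t := by ring
  have := apply_one_le_taylor_of_deriv2_sub_le hφ hφ' hφ''
  simp only [zero_smul, one_smul, add_zero] at this
  linarith

end

theorem stmt_16_general {n : ℕ} (f : EuclideanSpace ℝ (Fin n) → ℝ)
    (hf : ContDiff ℝ 2 f) (L₀ L₁ δ : ℝ) (hL₀ : 0 ≤ L₀) (hL₁ : 0 ≤ L₁)
    (hLip : ∀ x y : EuclideanSpace ℝ (Fin n), ‖x - y‖ ≤ δ →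
      ‖fderiv ℝ (gradient f) y - fderiv ℝ (gradient f) x‖
        ≤ (L₀ + L₁ * ‖gradient f x‖) * ‖x - y‖)
    (x s : EuclideanSpace ℝ (Fin n)) (σ : ℝ) (hσ : 0 < σ)
    (hg : gradient f x ≠ 0)
    (hsδ : ‖s‖ ≤ min δ (1 / Real.sqrt σ))
    (hdecr : -((inner ℝ (gradient f x) s : ℝ)
        + (1 / 2) * (inner ℝ s (fderiv ℝ (gradient f) x s) : ℝ))
      ≥ Real.sqrt σ * ‖gradient f x‖ * ‖s‖ ^ 2)
    (hpos : 0 < Real.sqrt σ * ‖gradient f x‖ * ‖s‖ ^ 2) :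
    1 - (f x - f (x + s)) / (-((inner ℝ (gradient f x) s : ℝ)
        + (1 / 2) * (inner ℝ s (fderiv ℝ (gradient f) x s) : ℝ)))
      ≤ (L₀ / ‖gradient f x‖ + L₁) / (6 * σ) := by
  have hcubic := apply_add_le_of_hessian_lipschitz hf (hLip x) (hsδ.trans (min_le_left _ _))
  set G := ‖gradient f x‖
  set L := L₀ + L₁ * G
  set m := -(inner ℝ (gradient f x) s + (1 / 2) * inner ℝ s (fderiv ℝ (gradient f) x s)) with hm
  have hG : 0 < G := norm_pos_iff.2 hg
  have hr : 0 < √σ := Real.sqrt_pos.2 hσ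
  have hS : 0 < ‖s‖ := norm_pos_iff.2 (by rintro rfl; simp at hpos)
  have hL : 0 ≤ L := by positivity
  have hm0 : 0 < m := hpos.trans_le hdecr
  have hmodel : f (x + s) - f x + m ≤ L * ‖s‖ ^ 3 / 6 := by rw [hm]; linarith
  calc 1 - (f x - f (x + s)) / m = (f (x + s) - f x + m) / m := by
        field_simp; ring
    _ ≤ (L * ‖s‖ ^ 3 / 6) / m := by gcongr
    _ ≤ (L * ‖s‖ ^ 3 / 6) / (√σ * G * ‖s‖ ^ 2) := by gcongr
    _ = L * ‖s‖ / (6 * √σ * G) := by field_simp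
    _ ≤ L * (1 / √σ) / (6 * √σ * G) := by gcongr; exact hsδ.trans (min_le_right _ _)
    _ = (L₀ / G + L₁) / (6 * σ) := by
        field_simp; rw [Real.sq_sqrt hσ.le]; ring

/-- Acceptance-ratio bound for a Newton-type step whose model decrease is at
least `√σ ‖g‖ ‖s‖²`, under the local Hessian Lipschitz condition. -/
theorem stmt_16 {n : ℕ} (f : EuclideanSpace ℝ (Fin n) → ℝ)
    (hf : ContDiff ℝ 2 f) (L₀ L₁ δ : ℝ) (hL₀ : 0 ≤ L₀) (hL₁ : 0 ≤ L₁) (hδ : 0 < δ)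
    (hLip : ∀ x y : EuclideanSpace ℝ (Fin n), ‖x - y‖ ≤ δ →
      ‖fderiv ℝ (gradient f) y - fderiv ℝ (gradient f) x‖
        ≤ (L₀ + L₁ * ‖gradient f x‖) * ‖x - y‖)
    (x s : EuclideanSpace ℝ (Fin n)) (σ : ℝ) (hσ : 0 < σ)
    (hg : gradient f x ≠ 0)
    (hsδ : ‖s‖ ≤ min δ (1 / Real.sqrt σ))
    (hdecr : -((inner ℝ (gradient f x) s : ℝ)
        + (1 / 2) * (inner ℝ s (fderiv ℝ (gradient f) x s) : ℝ))
      ≥ Real.sqrt σ * ‖gradient f x‖ * ‖s‖ ^ 2)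
    (hpos : 0 < Real.sqrt σ * ‖gradient f x‖ * ‖s‖ ^ 2) :
    1 - (f x - f (x + s)) / (-((inner ℝ (gradient f x) s : ℝ)
        + (1 / 2) * (inner ℝ s (fderiv ℝ (gradient f) x s) : ℝ)))
      ≤ (L₀ / ‖gradient f x‖ + L₁) / (6 * σ) :=
  stmt_16_general f hf L₀ L₁ δ hL₀ hL₁ hLip x s σ hσ hg hsδ hdecr hpos
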